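/- arXiv:1008.5285 — 3 statements merged into one kernel-verified Lean document; each statement's English description precedes it below -/
import Mathlib

section
/- The vertex model partition functions satisfy the boson-fermion duality V^{(m|n)}(q) = q^Ω · V^{(n|m)}(q^{-1}), where Ω = Σ_{j=1}^{N-1} ℰ_N(j), for any q > 0. -/
open Finset

/-- The motif (binary sequence of length `N - 1`) associated to a composition
`(k_1, …, k_r)` of `N`: blocks of `k_i - 1` ones separated by single zeros. -/
def motifList {N : ℕ} (c : Composition N) : List Bool :=
  List.intercalate [false] (c.blocks.map fun k => List.replicate (k - 1) true)

/-- The index `i` viewed in `Fin N` (position of `s_i`). -/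
def prevIdx {N : ℕ} (i : Fin (N - 1)) : Fin N :=
  ⟨i.val, by have := i.isLt; omega⟩

/-- The index `i + 1` viewed in `Fin N` (position of `s_{i+1}`). -/
def nextIdx {N : ℕ} (i : Fin (N - 1)) : Fin N :=
  ⟨i.val + 1, by have := i.isLt; omega⟩

/-- `H^{(m|n)}(s, s')`: `0` if `s < s'` or `s = s'` is fermionic (0-based value `≥ m`),
and `1` if `s > s'` or `s = s'` is bosonic (0-based value `< m`).
Spin states are elements of `Fin k` (with `k = m + n`), the 0-based version of `{1, …, m+n}`:
bosonic states have value `< m`, fermionic states have value `≥ m`. -/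
def Hvertex (m : ℕ) {k : ℕ} (s s' : Fin k) : ℕ :=
  if s < s' ∨ (s = s' ∧ m ≤ s.val) then 0 else 1

/-- The motif `δ` of a spin path configuration: `δ_i = 1` iff `s_i < s_{i+1}` or
`s_i = s_{i+1}` is fermionic, i.e. `δ_i = 1 - H^{(m|n)}(s_i, s_{i+1})`. -/
def spinMotif (m : ℕ) {N k : ℕ} (s : Fin N → Fin k) (i : Fin (N - 1)) : Bool :=
  decide (s (prevIdx i) < s (nextIdx i) ∨
    (s (prevIdx i) = s (nextIdx i) ∧ m ≤ (s (prevIdx i)).val))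

/-- The energy `E^{(m|n)}(s) = ∑_{j=1}^{N-1} ℰ_N(j) H^{(m|n)}(s_j, s_{j+1})` of a spin
path configuration. -/
noncomputable def energy (m : ℕ) {N k : ℕ} (ℰ : ℕ → ℝ) (s : Fin N → Fin k) : ℝ :=
  ∑ i : Fin (N - 1), ℰ (i.val + 1) * (Hvertex m (s (prevIdx i)) (s (nextIdx i)) : ℝ)

/-- The vertex model partition function `V^{(m|n)}(q) = ∑_s q^{E^{(m|n)}(s)}`. -/
noncomputable def V (m n N : ℕ) (ℰ : ℕ → ℝ) (q : ℝ) : ℝ :=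
  ∑ s : Fin N → Fin (m + n), q ^ (energy m ℰ s)

/-- The number of spin path configurations whose motif is the motif of the
composition `c`, i.e. the size of the fiber `F^{(m|n)}_c`. -/
def fiberCard (m n N : ℕ) (c : Composition N) : ℕ :=
  (Finset.univ.filter fun s : Fin N → Fin (m + n) =>
    ∀ i : Fin (N - 1), spinMotif m s i = (motifList c).getD i.val true).card

/-!
Reversing the spin alphabet, `s ↦ m + n + 1 - s`, turns the `m` bosonic states into the last
`m` states and the `n` fermionic ones into the first `n`, i.e. it is a bijection from
`(m|n)`-configurations to `(n|m)`-configurations. It reverses every strict inequality between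
neighbours and exchanges the two kinds of equal neighbours, so it swaps the values `0` and `1`
of `H` at every edge. Hence `E^{(n|m)}(flip s) = Ω - E^{(m|n)}(s)`, and summing `q^{E}` over
all configurations gives the duality.
-/

def spinFlip (m n : ℕ) : Fin (m + n) ≃ Fin (n + m) :=
  Fin.revPerm.trans (finCongr (add_comm m n))

@[simp]
lemma val_spinFlip {m n : ℕ} (s : Fin (m + n)) : (spinFlip m n s).val = m + n - (s.val + 1) := by
  simp [spinFlip]

lemma Hvertex_spinFlip_add (m n : ℕ) (s s' : Fin (m + n)) :
    Hvertex n (spinFlip m n s) (spinFlip m n s') + Hvertex m s s' = 1 := by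
  have hs := s.isLt
  have hs' := s'.isLt
  simp only [Hvertex, Fin.lt_def, Fin.ext_iff, val_spinFlip]
  split_ifs <;> omega

lemma energy_spinFlip (m n : ℕ) {N : ℕ} (ℰ : ℕ → ℝ) (s : Fin N → Fin (m + n)) :
    energy n ℰ (spinFlip m n ∘ s) = ∑ i : Fin (N - 1), ℰ (i.val + 1) - energy m ℰ s := by
  rw [energy, energy, ← sum_sub_distrib]
  refine sum_congr rfl fun i _ => ?_
  have hflip : (Hvertex n (spinFlip m n (s (prevIdx i))) (spinFlip m n (s (nextIdx i))) : ℝ) =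
      1 - Hvertex m (s (prevIdx i)) (s (nextIdx i)) := by
    rw [eq_sub_iff_add_eq]
    exact_mod_cast Hvertex_spinFlip_add m n _ _
  simp only [Function.comp_apply, hflip]
  ring

theorem V_duality_general (m n N : ℕ) (ℰ : ℕ → ℝ)
    (q : ℝ) (hq : 0 < q) :
    V m n N ℰ q =
      q ^ (∑ j ∈ Finset.range (N - 1), ℰ (j + 1)) * V n m N ℰ q⁻¹ := by
  have hΩ : ∑ j ∈ range (N - 1), ℰ (j + 1) = ∑ i : Fin (N - 1), ℰ (i.val + 1) :=
    (Fin.sum_univ_eq_sum_range (fun j => ℰ (j + 1)) (N - 1)).symm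
  rw [V, V, mul_sum, ← (Equiv.arrowCongr (Equiv.refl (Fin N)) (spinFlip m n)).sum_comp]
  refine sum_congr rfl fun s _ => ?_
  change _ = _ * q⁻¹ ^ energy n ℰ (spinFlip m n ∘ s)
  rw [energy_spinFlip, Real.inv_rpow hq.le, ← Real.rpow_neg hq.le, ← Real.rpow_add hq, hΩ,
    neg_sub, add_sub_cancel]

/-- boson-fermion duality for the vertex model partition functions:
`V^{(m|n)}(q) = q^Ω · V^{(n|m)}(q⁻¹)` with `Ω = ∑_{j=1}^{N-1} ℰ_N(j)`, for `q > 0`. -/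
theorem V_duality (m n N : ℕ) (hmn : 1 ≤ m + n) (hN : 1 ≤ N) (ℰ : ℕ → ℝ)
    (q : ℝ) (hq : 0 < q) :
    V m n N ℰ q =
      q ^ (∑ j ∈ Finset.range (N - 1), ℰ (j + 1)) * V n m N ℰ q⁻¹ :=
  V_duality_general m n N ℰ q hq
end

section
/- The spin chain partition functions satisfy the boson-fermion duality Z^{(m|n)}(q) = q^Ω · Z^{(n|m)}(q^{-1}), where Ω = Σ_{j=1}^{N-1} ℰ_N(j), Z^{(m|n)}(q) = Σ_{compositions k of N} q^{Σ_{l=1}^{r-1} ℰ_N(κ_l)} · N^{(m|n)}_k, and N^{(m|n)}_k is the number of spin configurations in {1,...,m+n}^N with motif corresponding to k. -/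
open Finset

/-- The spin chain partition function
`Z^{(m|n)}(q) = ∑_{compositions c of N} q^{∑_{l=1}^{r-1} ℰ_N(κ_l)} · N^{(m|n)}_c`. -/
noncomputable def Z (m n N : ℕ) (ℰ : ℕ → ℝ) (q : ℝ) : ℝ :=
  ∑ c : Composition N,
    q ^ (∑ i ∈ Finset.Ico 1 c.length, ℰ (c.sizeUpTo i)) * (fiberCard m n N c : ℝ)


lemma getD_replicate_true (n i : ℕ) : (List.replicate n true).getD i true = true := by
  induction n generalizing i with
  | zero => simp
  | succ n ih => cases i <;> simp [ih]

lemma ml_getD_false_iff (L : List ℕ) (hL : ∀ x ∈ L, 0 < x) (i : ℕ) :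
    (List.intercalate [false] (L.map fun k => List.replicate (k - 1) true)).getD i true = false
      ↔ ∃ l, 0 < l ∧ l < L.length ∧ (L.take l).sum = i + 1 := by
  induction L generalizing i with
  | nil =>
    simp only [List.map_nil, List.intercalate]
    constructor
    · intro h; exact absurd h (by simp)
    · rintro ⟨l, h1, h2, h3⟩; simp at h2
  | cons k L ih =>
    have hk : 0 < k := hL k (by simp)
    match L with
    | [] =>
      have hml : List.intercalate [false] ([k].map fun k => List.replicate (k - 1) true)
          = List.replicate (k - 1) true := by
        simp [List.intercalate]
      rw [hml, getD_replicate_true]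
      constructor
      · intro h; exact absurd h (by simp)
      · rintro ⟨l, h1, h2, h3⟩; simp at h2; omega
    | k' :: L' =>
      have hrec := ih (fun x hx => hL x (by simp [hx]))
      have hic : List.intercalate [false] ((k :: k' :: L').map fun k => List.replicate (k - 1) true)
          = List.replicate (k - 1) true ++ false ::
            List.intercalate [false] ((k' :: L').map fun k => List.replicate (k - 1) true) := by
        simp [List.intercalate]
      rw [hic]
      rcases lt_trichotomy i (k - 1) with hlt | heq | hgt
      · rw [List.getD_append _ _ _ _ (by simpa using hlt), getD_replicate_true]
        constructor
        · intro h; exact absurd h (by simp)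
        · rintro ⟨l, h1, h2, h3⟩
          obtain ⟨l', rfl⟩ : ∃ l', l = l' + 1 := ⟨l - 1, by omega⟩
          rw [List.take_succ_cons, List.sum_cons] at h3
          omega
      · rw [List.getD_append_right _ _ _ _ (by simp; omega)]
        have h0 : i - (List.replicate (k-1) true).length = 0 := by simp; omega
        rw [h0]
        simp only [List.getD_cons_zero, true_iff]
        exact ⟨1, by simp; omega⟩
      · rw [List.getD_append_right _ _ _ _ (by simp; omega)]
        have hlen : i - (List.replicate (k-1) true).length = (i - k) + 1 := by simp; omega
        rw [hlen, List.getD_cons_succ, hrec (i - k)]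
        constructor
        · rintro ⟨l, h1, h2, h3⟩
          refine ⟨l + 1, by omega, ?_, ?_⟩
          · simp only [List.length_cons] at h2 ⊢; omega
          · rw [List.take_succ_cons, List.sum_cons]; omega
        · rintro ⟨l, h1, h2, h3⟩
          obtain ⟨l', rfl⟩ : ∃ l', l = l' + 1 := ⟨l - 1, by omega⟩
          rw [List.take_succ_cons, List.sum_cons] at h3
          refine ⟨l', ?_, ?_, by omega⟩
          · rcases Nat.eq_zero_or_pos l' with rfl | h
            · exfalso; simp at h3; omega
            · exact h
          · simp only [List.length_cons] at h2 ⊢; omega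

-- ## Composition-level characterization

lemma motif_getD_false_iff {N : ℕ} (c : Composition N) (i : ℕ) :
    (motifList c).getD i true = false ↔
      ∃ l, 0 < l ∧ l < c.length ∧ c.sizeUpTo l = i + 1 :=
  ml_getD_false_iff c.blocks (fun _ hx => c.blocks_pos hx) i

lemma sizeUpTo_internal_bounds {N : ℕ} (c : Composition N) {l : ℕ}
    (h1 : 0 < l) (h2 : l < c.length) : 0 < c.sizeUpTo l ∧ c.sizeUpTo l < N := by
  constructor
  · calc 0 = c.sizeUpTo 0 := (c.sizeUpTo_zero).symm
      _ < c.sizeUpTo 1 := c.sizeUpTo_strict_mono (by omega)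
      _ ≤ c.sizeUpTo l := c.monotone_sizeUpTo h1
  · calc c.sizeUpTo l < c.sizeUpTo (l + 1) := c.sizeUpTo_strict_mono h2
      _ ≤ N := c.sizeUpTo_le _

lemma sizeUpTo_lt_sizeUpTo {N : ℕ} (c : Composition N) {a b : ℕ}
    (hab : a < b) (hb : b ≤ c.length) : c.sizeUpTo a < c.sizeUpTo b :=
  lt_of_lt_of_le (c.sizeUpTo_strict_mono (by omega)) (c.monotone_sizeUpTo (by omega))

lemma motif_injective (N : ℕ) :
    Function.Injective (fun (c : Composition N) (i : Fin (N - 1)) =>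
      (motifList c).getD i.val true) := by
  intro c c' h
  have key : ∀ v : ℕ, (∃ l, 0 < l ∧ l < c.length ∧ c.sizeUpTo l = v) ↔
      (∃ l, 0 < l ∧ l < c'.length ∧ c'.sizeUpTo l = v) := by
    intro v
    by_cases hv : 1 ≤ v ∧ v ≤ N - 1
    · have hvN : v - 1 < N - 1 := by omega
      have := congrFun h (⟨v - 1, hvN⟩ : Fin (N - 1))
      simp only at this
      have h1 := motif_getD_false_iff c (v - 1)
      have h2 := motif_getD_false_iff c' (v - 1)
      have hveq : v - 1 + 1 = v := Nat.succ_pred_eq_of_pos hv.1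
      rw [hveq] at h1 h2
      rw [← h1, ← h2, this]
    · constructor
      · rintro ⟨l, hl1, hl2, hl3⟩
        have hb := sizeUpTo_internal_bounds c hl1 hl2
        exfalso; omega
      · rintro ⟨l, hl1, hl2, hl3⟩
        have hb := sizeUpTo_internal_bounds c' hl1 hl2
        exfalso; omega
  apply (compositionEquiv N).injective
  apply CompositionAsSet.ext
  show c.boundaries = c'.boundaries
  have mem_bdry : ∀ (d : Composition N) (x : Fin (N + 1)),
      x ∈ d.boundaries ↔ ∃ j : Fin (d.length + 1), d.sizeUpTo j.val = x.val := by
    intro d x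
    simp [Composition.boundaries, Composition.boundary, Fin.ext_iff]
  have char : ∀ (d : Composition N) (x : Fin (N + 1)),
      x ∈ d.boundaries ↔ (x.val = 0 ∨ x.val = N ∨
        ∃ l, 0 < l ∧ l < d.length ∧ d.sizeUpTo l = x.val) := by
    intro d x
    rw [mem_bdry]
    constructor
    · rintro ⟨j, hj⟩
      rcases Nat.eq_zero_or_pos j.val with hj0 | hj0
      · left; rw [← hj, hj0, Composition.sizeUpTo_zero]
      · rcases eq_or_lt_of_le (Nat.lt_succ_iff.mp j.isLt) with hjl | hjl
        · right; left; rw [← hj, hjl, Composition.sizeUpTo_length]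
        · right; right; exact ⟨j.val, hj0, hjl, hj⟩
    · rintro (h0 | hN | ⟨l, hl1, hl2, hl3⟩)
      · exact ⟨0, by simpa using h0.symm⟩
      · exact ⟨Fin.last _, by simpa using hN.symm⟩
      · exact ⟨⟨l, by omega⟩, hl3⟩
  ext x
  rw [char, char, key x.val]

/-- The motif map as an equivalence between compositions and binary strings. -/
noncomputable def motifEquiv (N : ℕ) : Composition N ≃ (Fin (N - 1) → Bool) :=
  Equiv.ofBijective _ ((Fintype.bijective_iff_injective_and_card _).2
    ⟨motif_injective N, by simp [composition_card N]⟩)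

lemma motifEquiv_apply {N : ℕ} (c : Composition N) (i : Fin (N - 1)) :
    motifEquiv N c i = (motifList c).getD i.val true := rfl

-- ## Energy of a configuration in a fiber

lemma energy_eq_filter_sum (m : ℕ) {N k : ℕ} (ℰ : ℕ → ℝ) (s : Fin N → Fin k) :
    energy m ℰ s =
      ∑ i ∈ Finset.univ.filter (fun i : Fin (N - 1) => spinMotif m s i = false),
        ℰ (i.val + 1) := by
  rw [energy, Finset.sum_filter]
  refine Finset.sum_congr rfl fun i _ => ?_
  rw [Hvertex, spinMotif]
  by_cases hP : (s (prevIdx i) < s (nextIdx i) ∨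
      (s (prevIdx i) = s (nextIdx i) ∧ m ≤ (s (prevIdx i)).val))
  · simp [hP]
  · simp [hP]

lemma energy_fiber (m : ℕ) {N k : ℕ} (ℰ : ℕ → ℝ) (c : Composition N)
    (s : Fin N → Fin k)
    (hs : ∀ i : Fin (N - 1), spinMotif m s i = (motifList c).getD i.val true) :
    energy m ℰ s = ∑ l ∈ Finset.Ico 1 c.length, ℰ (c.sizeUpTo l) := by
  rw [energy_eq_filter_sum]
  symm
  refine Finset.sum_bij (fun l hl => (⟨c.sizeUpTo l - 1, ?_⟩ : Fin (N - 1))) ?_ ?_ ?_ ?_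
  · rw [Finset.mem_Ico] at hl
    have hb := sizeUpTo_internal_bounds c hl.1 hl.2
    omega
  · intro l hl
    rw [Finset.mem_Ico] at hl
    have hb := sizeUpTo_internal_bounds c hl.1 hl.2
    simp only [Finset.mem_filter, Finset.mem_univ, true_and]
    rw [hs, motif_getD_false_iff]
    refine ⟨l, hl.1, hl.2, ?_⟩
    show c.sizeUpTo l = c.sizeUpTo l - 1 + 1
    omega
  · intro a ha b hb hab
    rw [Finset.mem_Ico] at ha hb
    have hba := sizeUpTo_internal_bounds c ha.1 ha.2
    have hbb := sizeUpTo_internal_bounds c hb.1 hb.2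
    have : c.sizeUpTo a = c.sizeUpTo b := by
      simp only [Fin.mk.injEq] at hab
      omega
    by_contra hne
    rcases lt_or_gt_of_ne hne with hlt | hlt
    · exact absurd this (Nat.ne_of_lt (sizeUpTo_lt_sizeUpTo c hlt (by omega)))
    · exact absurd this.symm (Nat.ne_of_lt (sizeUpTo_lt_sizeUpTo c hlt (by omega)))
  · intro i hi
    simp only [Finset.mem_filter, Finset.mem_univ, true_and] at hi
    rw [hs, motif_getD_false_iff] at hi
    obtain ⟨l, hl1, hl2, hl3⟩ := hi
    exact ⟨l, Finset.mem_Ico.mpr ⟨hl1, hl2⟩, by simp [Fin.ext_iff]; omega⟩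
  · intro l hl
    rw [Finset.mem_Ico] at hl
    have hb := sizeUpTo_internal_bounds c hl.1 hl.2
    show ℰ (c.sizeUpTo l) = ℰ (c.sizeUpTo l - 1 + 1)
    congr 1
    omega

-- ## Z = V

lemma Z_eq_V (m n N : ℕ) (ℰ : ℕ → ℝ) (q : ℝ) : Z m n N ℰ q = V m n N ℰ q := by
  classical
  rw [Z, V]
  rw [← Finset.sum_fiberwise_of_maps_to
    (g := fun s : Fin N → Fin (m + n) => (motifEquiv N).symm (fun i => spinMotif m s i))
    (fun s _ => Finset.mem_univ _) (fun s => q ^ energy m ℰ s)]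
  refine Finset.sum_congr rfl fun c _ => ?_
  have hfib : Finset.univ.filter
        (fun s : Fin N → Fin (m + n) =>
          (motifEquiv N).symm (fun i => spinMotif m s i) = c)
      = Finset.univ.filter (fun s : Fin N → Fin (m + n) =>
          ∀ i : Fin (N - 1), spinMotif m s i = (motifList c).getD i.val true) := by
    ext s
    simp only [Finset.mem_filter, Finset.mem_univ, true_and]
    rw [Equiv.symm_apply_eq, funext_iff]
    exact Iff.rfl
  rw [hfib]
  have hval : ∀ s ∈ Finset.univ.filter (fun s : Fin N → Fin (m + n) =>
      ∀ i : Fin (N - 1), spinMotif m s i = (motifList c).getD i.val true),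
      q ^ energy m ℰ s = q ^ (∑ l ∈ Finset.Ico 1 c.length, ℰ (c.sizeUpTo l)) := by
    intro s hs
    rw [energy_fiber m ℰ c s (Finset.mem_filter.mp hs).2]
  rw [Finset.sum_congr rfl hval, Finset.sum_const, nsmul_eq_mul, fiberCard]
  ring

-- ## Spin reversal duality

/-- The spin-reversal bijection `s ↦ (m+n+1) - s` on path configurations. -/
def revEquiv (m n N : ℕ) : (Fin N → Fin (m + n)) ≃ (Fin N → Fin (n + m)) where
  toFun s j := Fin.cast (add_comm m n) (s j).rev
  invFun t j := (Fin.cast (add_comm n m) (t j)).rev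
  left_inv s := by
    funext j
    apply Fin.ext
    have := (s j).isLt
    simp only [Fin.val_rev, Fin.coe_cast]
    omega
  right_inv t := by
    funext j
    apply Fin.ext
    have := (t j).isLt
    simp only [Fin.val_rev, Fin.coe_cast]
    omega

lemma hvertex_rev (m n : ℕ) (hmn : 1 ≤ m + n) (s t : Fin (m + n)) :
    (Hvertex n (Fin.cast (add_comm m n) s.rev) (Fin.cast (add_comm m n) t.rev) : ℝ)
      = 1 - (Hvertex m s t : ℝ) := by
  have hs := s.isLt
  have ht := t.isLt
  rw [Hvertex, Hvertex]
  simp only [Fin.lt_def, Fin.ext_iff, Fin.coe_cast, Fin.val_rev]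
  split_ifs with h1 h2 h2
  · exfalso; omega
  · norm_num
  · norm_num
  · exfalso; omega

lemma energy_rev (m n N : ℕ) (hmn : 1 ≤ m + n) (ℰ : ℕ → ℝ) (s : Fin N → Fin (m + n)) :
    energy n ℰ (fun j => Fin.cast (add_comm m n) (s j).rev)
      = (∑ i : Fin (N - 1), ℰ (i.val + 1)) - energy m ℰ s := by
  rw [energy, energy, ← Finset.sum_sub_distrib]
  refine Finset.sum_congr rfl fun i _ => ?_
  show ℰ (i.val + 1) * (Hvertex n (Fin.cast (add_comm m n) (s (prevIdx i)).rev)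
      (Fin.cast (add_comm m n) (s (nextIdx i)).rev) : ℝ) = _
  rw [hvertex_rev m n hmn]
  ring

/-- boson-fermion duality for the spin chain partition functions:
`Z^{(m|n)}(q) = q^Ω · Z^{(n|m)}(q⁻¹)` with `Ω = ∑_{j=1}^{N-1} ℰ_N(j)`. -/
theorem Z_duality (m n N : ℕ) (hmn : 1 ≤ m + n) (hN : 1 ≤ N) (ℰ : ℕ → ℝ)
    (q : ℝ) (hq : 0 < q) :
    Z m n N ℰ q =
      q ^ (∑ j ∈ Finset.range (N - 1), ℰ (j + 1)) * Z n m N ℰ q⁻¹ := by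
  have hq' : 0 < q⁻¹ := inv_pos.mpr hq
  rw [Z_eq_V, Z_eq_V, V, V, Finset.mul_sum]
  rw [← Fin.sum_univ_eq_sum_range (fun j => ℰ (j + 1)) (N - 1)]
  refine Fintype.sum_equiv (revEquiv m n N) _ _ fun s => ?_
  set Ω : ℝ := ∑ i : Fin (N - 1), ℰ (i.val + 1) with hΩ
  have hE : energy n ℰ (revEquiv m n N s) = Ω - energy m ℰ s :=
    energy_rev m n N hmn ℰ s
  rw [hE, Real.inv_rpow hq.le, ← Real.rpow_neg hq.le, ← Real.rpow_add hq]
  congr 1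
  ring
end

section
/- Let m ≥ 1, n ≥ 1 and consider the fiber N^{(m|n)}_{(N)} over the composition (N) (motif all ones): it counts sequences s_1,...,s_N in {1,...,m+n} such that for each i, either s_i < s_{i+1} or s_i = s_{i+1} ∈ {m+1,...,m+n}. This count equals Σ_{j=0}^{min(m,N)} C(m,j) · C(N-j+n-1, N-j). -/
open Finset

/-!
A sequence all of whose steps are rises `s_i < s_{i+1}` or fermionic plateaus is weakly
increasing, so its bosonic entries form an initial block, of length `j` say. On that block the
sequence is strictly increasing with bosonic values, and on the remaining `N - j` positions it is
weakly increasing with fermionic values; conversely every such pair of blocks concatenates to an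
admissible sequence. Hence exactly `C(m, j) · multichoose(n, N - j)` sequences have `j` bosonic
entries, and stars and bars gives `multichoose(n, N - j) = C(N - j + n - 1, N - j)`. Terms with
`j > m` vanish, which is why the sum may stop at `min m N`.
-/

theorem Fin.card_filter_strictMono (k M : ℕ) :
    #{f : Fin k → Fin M | StrictMono f} = M.choose k := by
  let e : {f : Fin k → Fin M // StrictMono f} ≃ (Fin k ↪o Fin M) :=
    { toFun f := .ofStrictMono f.1 f.2
      invFun f := ⟨f, f.strictMono⟩ }
  rw [← Fintype.card_subtype, ← Nat.card_eq_fintype_card,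
    Nat.card_congr (e.trans Set.powersetCard.ofFinEmbEquiv), Set.powersetCard.card, Nat.card_fin]

theorem StrictMono.val_sub_le_val_sub {k M : ℕ} {h : Fin k → Fin M} (hh : StrictMono h)
    (a b : Fin k) : (b : ℕ) - a ≤ h b - h a := by
  have := card_le_card_of_injOn h (s := Ioc a b) (t := Ioc (h a) (h b))
    (fun i hi => by
      simp only [coe_Ioc, Set.mem_Ioc] at hi ⊢
      exact ⟨hh hi.1, hh.monotone hi.2⟩)
    hh.injective.injOn
  simpa only [Fin.card_Ioc] using this

theorem Fin.card_filter_monotone (k n : ℕ) :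
    #{g : Fin k → Fin n | Monotone g} = n.multichoose k := by
  rw [Nat.multichoose_eq, ← Fin.card_filter_strictMono]
  have bounds {h : Fin k → Fin (n + k - 1)} (hh : StrictMono h) (i : Fin k) :
      (i : ℕ) ≤ h i ∧ (h i : ℕ) - i < n := by
    have := hh.val_sub_le_val_sub ⟨0, i.pos⟩ i
    have := hh.val_sub_le_val_sub i ⟨k - 1, by grind⟩
    grind
  -- stars and bars: `g ↦ g + id` maps monotone maps bijectively onto strictly monotone ones
  refine card_bij' (fun g _ i => ⟨g i + i, by grind⟩)
    (fun h hh i => ⟨h i - i, (bounds (mem_filter.1 hh).2 i).2⟩) ?_ ?_ ?_ ?_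
  · simp only [mem_filter, mem_univ, true_and]
    intro g hg i j hij
    have := Fin.le_def.1 (hg hij.le)
    rw [Fin.lt_def] at hij ⊢
    dsimp only
    omega
  · simp only [mem_filter, mem_univ, true_and]
    intro h hh i j hij
    have := hh.val_sub_le_val_sub i j
    have := (bounds hh i).1
    have := Fin.le_def.1 (hh.monotone hij)
    rw [Fin.le_def] at hij ⊢
    dsimp only
    omega
  · intro g _
    ext i
    simp
  · intro h hh
    ext i
    simp [(bounds (mem_filter.1 hh).2 i).1]

def SuperRise (m : ℕ) {k : ℕ} (x y : Fin k) : Prop := x < y ∨ (x = y ∧ m ≤ x.val)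

instance (m k : ℕ) : DecidableRel (SuperRise m (k := k)) :=
  fun _ _ => inferInstanceAs (Decidable (_ ∨ _))

theorem forall_spinMotif_iff_isChain {m N k : ℕ} (s : Fin N → Fin k) :
    (∀ i : Fin (N - 1), spinMotif m s i = true) ↔ (List.ofFn s).IsChain (SuperRise m) := by
  rw [List.isChain_ofFn]
  exact ⟨fun h i hi => of_decide_eq_true (h ⟨i, by omega⟩),
    fun h i => decide_eq_true (h i (by omega))⟩

theorem List.IsChain.monotone_of_superRise {m N k : ℕ} {s : Fin N → Fin k}
    (hs : (List.ofFn s).IsChain (SuperRise m)) : Monotone s := by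
  rw [← List.sortedLE_ofFn_iff, List.sortedLE_iff_isChain]
  exact hs.imp fun x y hxy => hxy.elim le_of_lt fun h => h.1.le

def numBosons (m : ℕ) {N k : ℕ} (s : Fin N → Fin k) : ℕ := #{i | (s i : ℕ) < m}

theorem lt_numBosons_iff {m N k : ℕ} {s : Fin N → Fin k} (hs : Monotone s) (i : Fin N) :
    i < numBosons m s ↔ (s i : ℕ) < m :=
  Fin.lt_card_filter_univ_iff_apply_of_imp _ fun _ _ hji hi => (Fin.le_def.1 (hs hji)).trans_lt hi

theorem superRise_castAdd {m n : ℕ} {x y : Fin m} :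
    SuperRise m (Fin.castAdd n x) (Fin.castAdd n y) ↔ x < y := by
  simp only [SuperRise, Fin.lt_def, Fin.ext_iff, Fin.val_castAdd]
  omega

theorem superRise_natAdd {m n : ℕ} {x y : Fin n} :
    SuperRise m (Fin.natAdd m x) (Fin.natAdd m y) ↔ x ≤ y := by
  simp only [SuperRise, Fin.lt_def, Fin.le_def, Fin.ext_iff, Fin.val_natAdd]
  omega

theorem superRise_castAdd_natAdd {m n : ℕ} (x : Fin m) (y : Fin n) :
    SuperRise m (Fin.castAdd n x) (Fin.natAdd m y) :=
  .inl (by simp only [Fin.lt_def, Fin.val_castAdd, Fin.val_natAdd]; omega)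

def bosonFermionAppend {a b m n : ℕ} (f : Fin a → Fin m) (g : Fin b → Fin n) :
    Fin (a + b) → Fin (m + n) :=
  Fin.append (Fin.castAdd n ∘ f) (Fin.natAdd m ∘ g)

theorem bosonFermionAppend_injective {a b m n : ℕ} :
    Function.Injective fun p : (Fin a → Fin m) × (Fin b → Fin n) =>
      bosonFermionAppend p.1 p.2 := by
  intro p q h
  obtain ⟨h₁, h₂⟩ := Prod.ext_iff.1 <| (Fin.appendEquiv a b).injective
    (a₁ := (Fin.castAdd n ∘ p.1, Fin.natAdd m ∘ p.2))
    (a₂ := (Fin.castAdd n ∘ q.1, Fin.natAdd m ∘ q.2)) h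
  exact Prod.ext ((Fin.castAdd_injective m n).comp_left h₁)
    ((Fin.natAdd_injective n m).comp_left h₂)

theorem numBosons_bosonFermionAppend {a b m n : ℕ} (f : Fin a → Fin m) (g : Fin b → Fin n) :
    numBosons m (bosonFermionAppend f g) = a := by
  rw [numBosons, card_filter, Fin.sum_univ_add]
  simp [bosonFermionAppend]

theorem isChain_superRise_bosonFermionAppend {a b m n : ℕ} (f : Fin a → Fin m)
    (g : Fin b → Fin n) :
    (List.ofFn (bosonFermionAppend f g)).IsChain (SuperRise m) ↔ StrictMono f ∧ Monotone g := by
  simp only [bosonFermionAppend, List.ofFn_fin_append, ← List.map_ofFn, List.isChain_append,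
    List.isChain_map, superRise_castAdd, superRise_natAdd, ← List.sortedLT_iff_isChain,
    ← List.sortedLE_iff_isChain, List.sortedLT_ofFn_iff, List.sortedLE_ofFn_iff,
    List.getLast?_map, List.head?_map, Option.forall_mem_map, superRise_castAdd_natAdd,
    implies_true, and_true]

theorem exists_bosonFermionAppend_eq {a b m n : ℕ} {s : Fin (a + b) → Fin (m + n)}
    (hs : Monotone s) (ha : numBosons m s = a) : ∃ f g, bosonFermionAppend f g = s := by
  have hbos (i : Fin (a + b)) : (s i : ℕ) < m ↔ i < a := by rw [← lt_numBosons_iff hs, ha]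
  have hfer (i : Fin b) : m ≤ (s (Fin.natAdd a i) : ℕ) :=
    not_lt.1 fun h => by simpa using (hbos _).1 h
  refine ⟨fun i => ⟨s (Fin.castAdd b i), (hbos _).2 i.isLt⟩,
    fun i => ⟨s (Fin.natAdd a i) - m, by have := (s (Fin.natAdd a i)).isLt; grind⟩, ?_⟩
  funext i
  refine Fin.addCases (fun i => ?_) (fun i => ?_) i
  · simp [bosonFermionAppend]
  · have := hfer i
    simp only [bosonFermionAppend, Fin.append_right, Function.comp_apply, Fin.natAdd_mk,
      Fin.ext_iff]
    omega

theorem card_filter_isChain_superRise_numBosons_eq (m n a b : ℕ) :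
    #{s : Fin (a + b) → Fin (m + n) | (List.ofFn s).IsChain (SuperRise m) ∧ numBosons m s = a} =
      m.choose a * n.multichoose b := by
  have image_eq : ({s | (List.ofFn s).IsChain (SuperRise m) ∧ numBosons m s = a} :
      Finset (Fin (a + b) → Fin (m + n))) =
      (({f | StrictMono f} : Finset (Fin a → Fin m)) ×ˢ
        ({g | Monotone g} : Finset (Fin b → Fin n))).image
        fun p : (Fin a → Fin m) × (Fin b → Fin n) => bosonFermionAppend p.1 p.2 := by
    ext s
    simp only [mem_filter, mem_univ, true_and, mem_image, mem_product, Prod.exists]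
    constructor
    · rintro ⟨hs, ha⟩
      obtain ⟨f, g, rfl⟩ := exists_bosonFermionAppend_eq hs.monotone_of_superRise ha
      exact ⟨f, g, (isChain_superRise_bosonFermionAppend f g).1 hs, rfl⟩
    · rintro ⟨f, g, hfg, rfl⟩
      exact ⟨(isChain_superRise_bosonFermionAppend f g).2 hfg, numBosons_bosonFermionAppend f g⟩
  rw [image_eq, card_image_of_injective _ bosonFermionAppend_injective, card_product,
    Fin.card_filter_strictMono, Fin.card_filter_monotone]

theorem supersymmetric_all_ones_fiber_card_general (m n N : ℕ) :
    ((Finset.univ.filter fun s : Fin N → Fin (m + n) =>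
        ∀ i : Fin (N - 1), spinMotif m s i = true).card) =
      ∑ j ∈ Finset.range (min m N + 1),
        m.choose j * (N - j + n - 1).choose (N - j) := by
  have numBosons_le (s : Fin N → Fin (m + n)) : numBosons m s ≤ N :=
    (card_filter_le _ _).trans_eq (card_fin N)
  simp_rw [forall_spinMotif_iff_isChain]
  rw [card_eq_sum_card_fiberwise (f := numBosons m) (t := range (N + 1))
    fun s _ => mem_range_succ_iff.2 (numBosons_le s)]
  rw [sum_subset (range_subset_range.2 (by omega : min m N + 1 ≤ N + 1))]
  · refine sum_congr rfl fun j hj => ?_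
    obtain ⟨b, rfl⟩ := Nat.exists_eq_add_of_le (mem_range_succ_iff.1 hj)
    rw [filter_filter, card_filter_isChain_superRise_numBosons_eq, Nat.multichoose_eq,
      Nat.add_sub_cancel_left, add_comm n b]
  · intro j hj hjm
    rw [Nat.choose_eq_zero_of_lt (by grind), zero_mul]

/-- for `m, n ≥ 1`, the fiber over the composition `(N)` (motif all
ones: at every step strictly increase or stay constant at a fermionic value) has size
`∑_{j=0}^{min(m,N)} C(m,j) · C(N-j+n-1, N-j)`. -/
theorem supersymmetric_all_ones_fiber_card (m n N : ℕ) (hm : 1 ≤ m) (hn : 1 ≤ n)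
    (hN : 1 ≤ N) :
    ((Finset.univ.filter fun s : Fin N → Fin (m + n) =>
        ∀ i : Fin (N - 1), spinMotif m s i = true).card) =
      ∑ j ∈ Finset.range (min m N + 1),
        m.choose j * (N - j + n - 1).choose (N - j) :=
  supersymmetric_all_ones_fiber_card_general m n N
end
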